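/- Let X be a nonempty compact metric space with metric d and let f : X → X be an arbitrary function with no periodic points, i.e., f^[k](x) ≠ x for every x ∈ X and every integer k ≥ 1. Then there exists an infinite, topologically closed subset S ⊆ X with f(S) ⊆ S that is internally SC_d-transitive. -/

import Mathlib

/-!
A minimal nonempty closed invariant set `M` exists by Zorn's lemma and Cantor's intersection
theorem. It is infinite, since a finite invariant set carries a periodic orbit. For `x ∈ M`, the set of points of `M` reachable from `x` by arbitrarily
cheap strong chains inside `M` is closed (move the last point of a chain), invariant (append one
exact step) and contains `f x`; by minimality it is all of `M`.
-/

/-- `c 0, c 1, …, c n` is a strong `(ε,d)`-chain for `f` from `x` to `y`: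
`n ≥ 1`, `c 0 = x`, `c n = y` and `∑_{i<n} d(f(c i), c (i+1)) < ε`. -/
def IsStrongChain {X : Type*} [MetricSpace X] (f : X → X) (ε : ℝ) (x y : X)
    (n : ℕ) (c : ℕ → X) : Prop :=
  1 ≤ n ∧ c 0 = x ∧ c n = y ∧
    ∑ i ∈ Finset.range n, dist (f (c i)) (c (i + 1)) < ε

open Set Function

theorem Set.Finite.exists_mem_periodicPts_of_mapsTo {α : Type*} {f : α → α} {s : Set α}
    (hs : s.Finite) (hne : s.Nonempty) (hf : MapsTo f s s) : ∃ x ∈ s, x ∈ periodicPts f := by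
  obtain ⟨x, hx⟩ := hne
  obtain ⟨a, b, hab, heq⟩ :=
    hs.exists_lt_map_eq_of_forall_mem (f := fun n : ℕ => f^[n] x) fun n => hf.iterate n hx
  refine ⟨f^[a] x, hf.iterate a hx, mk_mem_periodicPts (Nat.sub_pos_of_lt hab) ?_⟩
  change f^[b - a] (f^[a] x) = f^[a] x
  rw [← iterate_add_apply, Nat.sub_add_cancel hab.le]
  exact heq.symm

theorem exists_minimal_nonempty_isClosed_mapsTo {X : Type*} [TopologicalSpace X] [CompactSpace X]
    [Nonempty X] (f : X → X) :
    ∃ M : Set X, Minimal (fun S : Set X => S.Nonempty ∧ IsClosed S ∧ MapsTo f S S) M := by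
  set 𝒞 := {S : Set X | S.Nonempty ∧ IsClosed S ∧ MapsTo f S S}
  have hbound :
      ∀ c ⊆ 𝒞, IsChain (· ⊆ ·) c → c.Nonempty → ∃ lb ∈ 𝒞, ∀ s ∈ c, lb ⊆ s := by
    intro c hc hchain hcne
    have : Nonempty c := hcne.to_subtype
    have hdir : DirectedOn (· ⊇ ·) c := fun a ha b hb =>
      (hchain.total ha hb).elim (fun h => ⟨a, ha, subset_rfl, h⟩)
        fun h => ⟨b, hb, h, subset_rfl⟩
    refine ⟨⋂₀ c, ⟨?_, isClosed_sInter fun U hU => (hc hU).2.1, ?_⟩,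
      fun _ => sInter_subset_of_mem⟩
    · exact IsCompact.nonempty_sInter_of_directed_nonempty_isCompact_isClosed hdir
        (fun U hU => (hc hU).1) (fun U hU => (hc hU).2.1.isCompact) (fun U hU => (hc hU).2.1)
    · exact fun z hz => mem_sInter.2 fun U hU => (hc hU).2.2 (hz U hU)
  obtain ⟨M, -, hM⟩ := zorn_superset_nonempty 𝒞 hbound univ
    ⟨univ_nonempty, isClosed_univ, mapsTo_univ f _⟩
  exact ⟨M, hM⟩

theorem forall_le_update_mem {α : Type*} {c : ℕ → α} {S : Set α} {k : ℕ} {z : α}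
    (hc : ∀ i < k, c i ∈ S) (hz : z ∈ S) :
    ∀ i ≤ k, update c k z i ∈ S := fun i hi => by
  rcases eq_or_ne i k with rfl | hik
  · simpa using hz
  · simpa [hik] using hc i (by omega)

section StrongChain

variable {X : Type*} [MetricSpace X] {f : X → X} {ε : ℝ} {x y : X} {n : ℕ} {c : ℕ → X}

theorem isStrongChain_iterate (hε : 0 < ε) (hn : 1 ≤ n) :
    IsStrongChain f ε x (f^[n] x) n (f^[·] x) :=
  ⟨hn, rfl, rfl, by simpa only [← iterate_succ_apply' f, dist_self, Finset.sum_const_zero]⟩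

theorem IsStrongChain.mono {ε' : ℝ} (h : IsStrongChain f ε x y n c) (hεε' : ε ≤ ε') :
    IsStrongChain f ε' x y n c :=
  ⟨h.1, h.2.1, h.2.2.1, h.2.2.2.trans_le hεε'⟩

theorem IsStrongChain.update_last (h : IsStrongChain f ε x y n c) (z : X) :
    IsStrongChain f (ε + dist y z) x z n (update c n z) := by
  obtain ⟨hn, hc0, hcn, hsum⟩ := h
  obtain ⟨m, rfl⟩ : ∃ m, n = m + 1 := ⟨n - 1, by omega⟩
  refine ⟨hn, by simpa using hc0, by simp, ?_⟩
  have hlow : ∀ i ∈ Finset.range m,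
      dist (f (update c (m + 1) z i)) (update c (m + 1) z (i + 1)) = dist (f (c i)) (c (i + 1)) := fun i hi => by
    rw [Finset.mem_range] at hi
    rw [update_of_ne (by omega), update_of_ne (by omega)]
  rw [Finset.sum_range_succ] at hsum ⊢
  rw [Finset.sum_congr rfl hlow, update_of_ne (by omega), update_self]
  have := dist_triangle (f (c m)) y z
  rw [hcn] at hsum
  linarith

theorem IsStrongChain.snoc (h : IsStrongChain f ε x y n c) (z : X) :
    IsStrongChain f (ε + dist (f y) z) x z (n + 1) (update c (n + 1) z) := by
  obtain ⟨hn, hc0, hcn, hsum⟩ := h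
  refine ⟨by omega, by simpa using hc0, by simp, ?_⟩
  have hlow : ∀ i ∈ Finset.range n,
      dist (f (update c (n + 1) z i)) (update c (n + 1) z (i + 1)) = dist (f (c i)) (c (i + 1)) := fun i hi => by
    rw [Finset.mem_range] at hi
    rw [update_of_ne (by omega), update_of_ne (by omega)]
  rw [Finset.sum_range_succ, Finset.sum_congr rfl hlow, update_of_ne (by omega), update_self,
    hcn]
  linarith

end StrongChain

section Reachable

variable {X : Type*} [MetricSpace X] {f : X → X} {S : Set X} {x : X}

def strongChainReachable (f : X → X) (S : Set X) (x : X) : Set X :=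
  {y | ∀ ε > 0, ∃ (n : ℕ) (c : ℕ → X), IsStrongChain f ε x y n c ∧ ∀ i ≤ n, c i ∈ S}

theorem strongChainReachable_subset : strongChainReachable f S x ⊆ S := fun y hy => by
  obtain ⟨n, c, ⟨-, -, hcn, -⟩, hS⟩ := hy 1 one_pos
  exact hcn ▸ hS n le_rfl

theorem apply_mem_strongChainReachable (hx : x ∈ S) (hS : MapsTo f S S) :
    f x ∈ strongChainReachable f S x := fun _ hε =>
  ⟨1, (f^[·] x), isStrongChain_iterate hε le_rfl, fun i _ => hS.iterate i hx⟩

theorem mapsTo_strongChainReachable (hS : MapsTo f S S) :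
    MapsTo f (strongChainReachable f S x) (strongChainReachable f S x) := fun y hy ε hε => by
  obtain ⟨n, c, hc, hcS⟩ := hy ε hε
  refine ⟨n + 1, update c (n + 1) (f y), by simpa using hc.snoc (f y),
    forall_le_update_mem (fun i hi => hcS i (by omega)) ?_⟩
  exact hS (strongChainReachable_subset hy)

theorem isClosed_strongChainReachable (hS : IsClosed S) :
    IsClosed (strongChainReachable f S x) := by
  refine isClosed_of_closure_subset fun z hz ε (hε : 0 < ε) => ?_
  have hzS : z ∈ S := hS.closure_subset_iff.2 strongChainReachable_subset hz
  obtain ⟨w, hw, hzw⟩ := Metric.mem_closure_iff.1 hz (ε / 2) (half_pos hε)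
  obtain ⟨n, c, hc, hcS⟩ := hw (ε / 2) (half_pos hε)
  refine ⟨n, update c n z, (hc.update_last z).mono ?_,
    forall_le_update_mem (fun i hi => hcS i hi.le) hzS⟩
  rw [dist_comm] at hzw
  linarith

end Reachable

theorem exists_infinite_strong_chain_transitive_subsystem_of_no_periodic_points
    {X : Type*} [MetricSpace X] [CompactSpace X] [Nonempty X] (f : X → X)
    (hper : ∀ x : X, ∀ k : ℕ, 1 ≤ k → f^[k] x ≠ x) :
    ∃ S : Set X, S.Infinite ∧ IsClosed S ∧ Set.MapsTo f S S ∧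
      ∀ x ∈ S, ∀ y ∈ S, ∀ ε : ℝ, 0 < ε →
        ∃ (n : ℕ) (c : ℕ → X), IsStrongChain f ε x y n c ∧ ∀ i ≤ n, c i ∈ S := by
  obtain ⟨M, ⟨hne, hcl, hinv⟩, hmin⟩ := exists_minimal_nonempty_isClosed_mapsTo f
  refine ⟨M, fun hfin => ?_, hcl, hinv, fun x hx y hy => ?_⟩
  · obtain ⟨z, -, hz⟩ := hfin.exists_mem_periodicPts_of_mapsTo hne hinv
    obtain ⟨k, hk, hkz⟩ := mem_periodicPts.1 hz
    exact hper z k hk hkz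
  · have hM : M ⊆ strongChainReachable f M x :=
      hmin ⟨⟨f x, apply_mem_strongChainReachable hx hinv⟩, isClosed_strongChainReachable hcl,
        mapsTo_strongChainReachable hinv⟩ strongChainReachable_subset
    exact hM hy
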